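/- arXiv:2307.00881 — 3 statements merged into one kernel-verified Lean document; each statement's English description precedes it below -/
import Mathlib

section
/- Let ρ₀ and σ be density matrices on a d-dimensional Hilbert space, and let V be a subspace of Hermitian matrices. If the orthogonal projections (with respect to the Hilbert–Schmidt inner product) of ρ₀ and σ onto V are both equal to ϱ, then the Hilbert–Schmidt distance satisfies d_HS(ρ₀, σ) ≤ √(1 − Tr(ϱ²)) + √(Tr(ρ₀²) − Tr(ϱ²)). -/
open Matrix ComplexOrder

/-! Both ρ₀ − ϱ and σ − ϱ are Hilbert–Schmidt orthogonal to ϱ ∈ V, so by Pythagoras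
‖ρ₀ − ϱ‖² = Tr ρ₀² − Tr ϱ² and ‖σ − ϱ‖² = Tr σ² − Tr ϱ². The triangle inequality through ϱ
and the purity bound Tr σ² ≤ (Tr σ)² = 1 (sum of squared eigenvalues) give the claim. -/

section InnerProductSpace
variable {𝕜 E : Type*} [RCLike 𝕜] [SeminormedAddCommGroup E] [InnerProductSpace 𝕜 E]
open scoped InnerProductSpace

theorem norm_sub_le_of_inner_sub_eq_zero {x y p : E} (hx : ⟪p, x - p⟫_𝕜 = 0)
    (hy : ⟪p, y - p⟫_𝕜 = 0) :
    ‖x - y‖ ≤ √(‖y‖ ^ 2 - ‖p‖ ^ 2) + √(‖x‖ ^ 2 - ‖p‖ ^ 2) := by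
  have pythagoras {z : E} (hz : ⟪p, z - p⟫_𝕜 = 0) : √(‖z‖ ^ 2 - ‖p‖ ^ 2) = ‖z - p‖ := by
    have := norm_add_sq_eq_norm_sq_add_norm_sq_of_inner_eq_zero p (z - p) hz
    rw [add_sub_cancel, ← sq, ← sq, ← sq] at this
    rw [this, add_sub_cancel_left, Real.sqrt_sq (norm_nonneg _)]
  rw [pythagoras hx, pythagoras hy, add_comm]
  simpa using norm_sub_le (x - p) (y - p)

end InnerProductSpace

namespace Matrix

variable {𝕜 n : Type*} [RCLike 𝕜] [Fintype n] [DecidableEq n]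

theorem trace_conjStarAlgAut (u : unitary (Matrix n n 𝕜)) (A : Matrix n n 𝕜) :
    (Unitary.conjStarAlgAut 𝕜 _ u A).trace = A.trace := by
  rw [Unitary.conjStarAlgAut_apply, trace_mul_cycle, Unitary.coe_star_mul_self, one_mul]

theorem IsHermitian.re_trace_mul_self {A : Matrix n n 𝕜} (hA : A.IsHermitian) :
    RCLike.re (A * A).trace = ∑ i, hA.eigenvalues i ^ 2 := by
  conv_lhs => rw [hA.spectral_theorem]
  rw [← map_mul, trace_conjStarAlgAut, diagonal_mul_diagonal, trace_diagonal, map_sum]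
  simp [sq]

theorem PosSemidef.re_trace_mul_self_le {A : Matrix n n 𝕜} (hA : A.PosSemidef) :
    RCLike.re (A * A).trace ≤ RCLike.re A.trace ^ 2 := by
  rw [hA.1.re_trace_mul_self, hA.1.trace_eq_sum_eigenvalues, map_sum]
  simpa using Finset.sum_sq_le_sq_sum_of_nonneg fun i _ ↦ hA.eigenvalues_nonneg i

section HilbertSchmidt

/- The Hilbert–Schmidt structure `⟪A, B⟫ = Tr (B Aᴴ)` is the matrix inner product weighted by
the identity. -/
noncomputable local instance : SeminormedAddCommGroup (Matrix n n 𝕜) :=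
  toMatrixSeminormedAddCommGroup 1 PosSemidef.one
local instance : InnerProductSpace 𝕜 (Matrix n n 𝕜) := toMatrixInnerProductSpace 1 PosSemidef.one

open scoped InnerProductSpace

theorem IsHermitian.norm_sq_eq {A : Matrix n n 𝕜} (hA : A.IsHermitian) :
    ‖A‖ ^ 2 = RCLike.re (A * A).trace := by
  simp [norm_sq_eq_re_inner (𝕜 := 𝕜), inner, hA.eq]

theorem sqrt_re_trace_sub_mul_sub_le {ρ σ ϱ : Matrix n n 𝕜} (hρ : ρ.IsHermitian)
    (hσ : σ.IsHermitian) (hϱ : ϱ.IsHermitian) (hρϱ : ((ρ - ϱ) * ϱ).trace = 0)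
    (hσϱ : ((σ - ϱ) * ϱ).trace = 0) :
    √(RCLike.re ((ρ - σ) * (ρ - σ)).trace) ≤
      √(RCLike.re (σ * σ).trace - RCLike.re (ϱ * ϱ).trace) +
        √(RCLike.re (ρ * ρ).trace - RCLike.re (ϱ * ϱ).trace) := by
  have inner_eq {A : Matrix n n 𝕜} (hA : (A * ϱ).trace = 0) : ⟪ϱ, A⟫_𝕜 = 0 := by
    simpa [inner, hϱ.eq] using hA
  rw [← (hρ.sub hσ).norm_sq_eq, Real.sqrt_sq (norm_nonneg _), ← hρ.norm_sq_eq, ← hσ.norm_sq_eq,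
    ← hϱ.norm_sq_eq]
  exact norm_sub_le_of_inner_sub_eq_zero (inner_eq hρϱ) (inner_eq hσϱ)

end HilbertSchmidt

end Matrix

theorem stmt0_general {d : ℕ} (ρ₀ σ ϱ : Matrix (Fin d) (Fin d) ℂ)
    (V : Submodule ℝ (Matrix (Fin d) (Fin d) ℂ))
    (hVH : ∀ A ∈ V, A.IsHermitian)
    (hρ₀ : ρ₀.PosSemidef)
    (hσ : σ.PosSemidef) (htσ : σ.trace = 1)
    (hϱV : ϱ ∈ V)
    (hρ₀proj : ∀ A ∈ V, Matrix.trace ((ρ₀ - ϱ) * A) = 0)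
    (hσproj : ∀ A ∈ V, Matrix.trace ((σ - ϱ) * A) = 0) :
    Real.sqrt ((Matrix.trace ((ρ₀ - σ) * (ρ₀ - σ))).re) ≤
      Real.sqrt (1 - (Matrix.trace (ϱ * ϱ)).re) +
        Real.sqrt ((Matrix.trace (ρ₀ * ρ₀)).re - (Matrix.trace (ϱ * ϱ)).re) := by
  have hσ_purity : (σ * σ).trace.re ≤ 1 := by
    simpa [htσ] using hσ.re_trace_mul_self_le
  calc _ ≤ √((σ * σ).trace.re - (ϱ * ϱ).trace.re) + √((ρ₀ * ρ₀).trace.re - (ϱ * ϱ).trace.re) :=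
        sqrt_re_trace_sub_mul_sub_le hρ₀.1 hσ.1 (hVH ϱ hϱV) (hρ₀proj ϱ hϱV) (hσproj ϱ hϱV)
    _ ≤ _ := by gcongr

/-- If density matrices ρ₀ and σ have the same orthogonal projection ϱ
(w.r.t. the Hilbert–Schmidt inner product) onto a subspace V of Hermitian matrices, then
d_HS(ρ₀,σ) ≤ √(1 − Tr ϱ²) + √(Tr ρ₀² − Tr ϱ²). -/
theorem stmt0 {d : ℕ} (ρ₀ σ ϱ : Matrix (Fin d) (Fin d) ℂ)
    (V : Submodule ℝ (Matrix (Fin d) (Fin d) ℂ))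
    (hVH : ∀ A ∈ V, A.IsHermitian)
    (hρ₀ : ρ₀.PosSemidef) (htρ₀ : ρ₀.trace = 1)
    (hσ : σ.PosSemidef) (htσ : σ.trace = 1)
    (hϱV : ϱ ∈ V)
    (hρ₀proj : ∀ A ∈ V, Matrix.trace ((ρ₀ - ϱ) * A) = 0)
    (hσproj : ∀ A ∈ V, Matrix.trace ((σ - ϱ) * A) = 0) :
    Real.sqrt ((Matrix.trace ((ρ₀ - σ) * (ρ₀ - σ))).re) ≤
      Real.sqrt (1 - (Matrix.trace (ϱ * ϱ)).re) +
        Real.sqrt ((Matrix.trace (ρ₀ * ρ₀)).re - (Matrix.trace (ϱ * ϱ)).re) :=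
  stmt0_general ρ₀ σ ϱ V hVH hρ₀ hσ htσ hϱV hρ₀proj hσproj
end

section
/- Let ρ₀ and σ be density matrices with the same orthogonal projection ϱ onto a subspace of Hermitian matrices (Hilbert–Schmidt inner product). Then Tr(ρ₀σ) ≥ Tr(ϱ²) − √(Tr(ρ₀²) − Tr(ϱ²)) · √(1 − Tr(ϱ²)). -/
/-!
Both `ρ₀ - ϱ` and `σ - ϱ` are Hilbert–Schmidt orthogonal to `ϱ`, so by Pythagoras
`Tr(ρ₀σ) = Tr(ϱ²) + ⟨ρ₀ - ϱ, σ - ϱ⟩`, `‖ρ₀ - ϱ‖² = Tr(ρ₀²) - Tr(ϱ²)` and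
`‖σ - ϱ‖² = Tr(σ²) - Tr(ϱ²) ≤ 1 - Tr(ϱ²)`. Cauchy–Schwarz bounds the cross term.
-/

open Matrix ComplexOrder

namespace Matrix

variable {n 𝕜 : Type*} [Fintype n] [RCLike 𝕜]

theorem trace_mul_eq_trace_sub_mul_sub_add {R : Type*} [CommRing R] (A B P : Matrix n n R)
    (hA : trace ((A - P) * P) = 0) (hB : trace ((B - P) * P) = 0) :
    trace (A * B) = trace ((A - P) * (B - P)) + trace (P * P) := by
  have hB' : trace (P * (B - P)) = 0 := by rw [trace_mul_comm, hB]
  have : A * B = (A - P) * (B - P) + (A - P) * P + P * (B - P) + P * P := by noncomm_ring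
  rw [this, trace_add, trace_add, trace_add, hA, hB', add_zero, add_zero]

theorem norm_trace_conjTranspose_mul_le (X Y : Matrix n n 𝕜) :
    ‖trace (Xᴴ * Y)‖ ≤ √(RCLike.re (trace (Xᴴ * X))) * √(RCLike.re (trace (Yᴴ * Y))) := by
  classical
  -- the Hilbert–Schmidt inner product is the one induced by the positive semidefinite `1`
  let _ := toMatrixSeminormedAddCommGroup (1 : Matrix n n 𝕜) PosSemidef.one
  let _ := toMatrixInnerProductSpace (1 : Matrix n n 𝕜) PosSemidef.one
  have hinner : ∀ Z W : Matrix n n 𝕜, inner 𝕜 Z W = trace (Zᴴ * W) := fun Z W => by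
    change trace (W * 1 * Zᴴ) = _
    rw [mul_one, trace_mul_comm]
  simpa only [hinner, norm_eq_sqrt_re_inner (𝕜 := 𝕜)] using norm_inner_le_norm (𝕜 := 𝕜) X Y

theorem IsHermitian.trace_mul_self_eq_sum_eigenvalues_sq [DecidableEq n] {A : Matrix n n 𝕜}
    (hA : A.IsHermitian) :
    trace (A * A) = ∑ i, (hA.eigenvalues i : 𝕜) ^ 2 := by
  conv_lhs => rw [hA.spectral_theorem, ← map_mul]
  rw [Unitary.conjStarAlgAut_apply, trace_mul_cycle,
    Unitary.coe_star_mul_self, one_mul, diagonal_mul_diagonal, trace_diagonal]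
  simp [sq]

theorem PosSemidef.re_trace_mul_self_le_re_trace_sq {A : Matrix n n 𝕜} (hA : A.PosSemidef) :
    RCLike.re (trace (A * A)) ≤ RCLike.re (trace A) ^ 2 := by
  classical
  rw [hA.1.trace_mul_self_eq_sum_eigenvalues_sq, hA.1.trace_eq_sum_eigenvalues]
  simp only [map_sum, ← RCLike.ofReal_pow, RCLike.ofReal_re]
  exact Finset.sum_sq_le_sq_sum_of_nonneg fun i _ => hA.eigenvalues_nonneg i

end Matrix

theorem stmt2_general {d : ℕ} (ρ₀ σ ϱ : Matrix (Fin d) (Fin d) ℂ)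
    (V : Submodule ℝ (Matrix (Fin d) (Fin d) ℂ))
    (hVH : ∀ A ∈ V, A.IsHermitian)
    (hρ₀ : ρ₀.PosSemidef)
    (hσ : σ.PosSemidef) (htσ : σ.trace = 1)
    (hϱV : ϱ ∈ V)
    (hρ₀proj : ∀ A ∈ V, Matrix.trace ((ρ₀ - ϱ) * A) = 0)
    (hσproj : ∀ A ∈ V, Matrix.trace ((σ - ϱ) * A) = 0) :
    (Matrix.trace (ρ₀ * σ)).re ≥
      (Matrix.trace (ϱ * ϱ)).re -
        Real.sqrt ((Matrix.trace (ρ₀ * ρ₀)).re - (Matrix.trace (ϱ * ϱ)).re) *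
          Real.sqrt (1 - (Matrix.trace (ϱ * ϱ)).re) := by
  have hϱ : ϱ.IsHermitian := hVH ϱ hϱV
  have hρ₀ϱ := hρ₀proj ϱ hϱV
  have hσϱ := hσproj ϱ hϱV
  have hσσ : (trace (σ * σ)).re ≤ 1 := by simpa [htσ] using hσ.re_trace_mul_self_le_re_trace_sq
  have hcs := norm_trace_conjTranspose_mul_le (ρ₀ - ϱ) (σ - ϱ)
  rw [(hρ₀.1.sub hϱ).eq, (hσ.1.sub hϱ).eq, RCLike.re_to_complex, RCLike.re_to_complex] at hcs
  calc (trace (ρ₀ * σ)).re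
      = (trace (ϱ * ϱ)).re + (trace ((ρ₀ - ϱ) * (σ - ϱ))).re := by
        rw [trace_mul_eq_trace_sub_mul_sub_add _ _ _ hρ₀ϱ hσϱ, Complex.add_re, add_comm]
    _ ≥ (trace (ϱ * ϱ)).re - √((trace ((ρ₀ - ϱ) * (ρ₀ - ϱ))).re) *
          √((trace ((σ - ϱ) * (σ - ϱ))).re) := by
        linarith [neg_abs_le (trace ((ρ₀ - ϱ) * (σ - ϱ))).re,
          Complex.abs_re_le_norm (trace ((ρ₀ - ϱ) * (σ - ϱ))), hcs]
    _ = (trace (ϱ * ϱ)).re - √((trace (ρ₀ * ρ₀)).re - (trace (ϱ * ϱ)).re) *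
          √((trace (σ * σ)).re - (trace (ϱ * ϱ)).re) := by
        rw [trace_mul_eq_trace_sub_mul_sub_add ρ₀ ρ₀ ϱ hρ₀ϱ hρ₀ϱ,
          trace_mul_eq_trace_sub_mul_sub_add σ σ ϱ hσϱ hσϱ]
        simp
    _ ≥ (trace (ϱ * ϱ)).re - √((trace (ρ₀ * ρ₀)).re - (trace (ϱ * ϱ)).re) *
          √(1 - (trace (ϱ * ϱ)).re) := by
        gcongr

/-- Tr(ρ₀σ) ≥ Tr(ϱ²) − √(Tr ρ₀² − Tr ϱ²)·√(1 − Tr ϱ²) when ρ₀ and σ share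
the same projection ϱ onto a subspace V of Hermitian matrices. -/
theorem stmt2 {d : ℕ} (ρ₀ σ ϱ : Matrix (Fin d) (Fin d) ℂ)
    (V : Submodule ℝ (Matrix (Fin d) (Fin d) ℂ))
    (hVH : ∀ A ∈ V, A.IsHermitian)
    (hρ₀ : ρ₀.PosSemidef) (htρ₀ : ρ₀.trace = 1)
    (hσ : σ.PosSemidef) (htσ : σ.trace = 1)
    (hϱV : ϱ ∈ V)
    (hρ₀proj : ∀ A ∈ V, Matrix.trace ((ρ₀ - ϱ) * A) = 0)
    (hσproj : ∀ A ∈ V, Matrix.trace ((σ - ϱ) * A) = 0) :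
    (Matrix.trace (ρ₀ * σ)).re ≥
      (Matrix.trace (ϱ * ϱ)).re -
        Real.sqrt ((Matrix.trace (ρ₀ * ρ₀)).re - (Matrix.trace (ϱ * ϱ)).re) *
          Real.sqrt (1 - (Matrix.trace (ϱ * ϱ)).re) :=
  stmt2_general ρ₀ σ ϱ V hVH hρ₀ hσ htσ hϱV hρ₀proj hσproj
end

section
/- Let ρ₀ be a density matrix, V ⊆ W two subspaces of Hermitian matrices, and let ϱ_V, ϱ_W be the orthogonal projections of ρ₀ onto V and W respectively (Hilbert–Schmidt inner product). Then the bound B(ϱ) = √(1 − Tr(ϱ²)) + √(Tr(ρ₀²) − Tr(ϱ²)) satisfies B(ϱ_W) ≤ B(ϱ_V); i.e., enlarging the measured subspace never worsens the distance bound. -/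
/-!
Orthogonality of ρ₀ - ϱ_W to W ∋ ϱ_V and of ρ₀ - ϱ_V to V ∋ ϱ_V gives
Tr(ϱ_W ϱ_V) = Tr(ρ₀ ϱ_V) = Tr(ϱ_V²), so Pythagoras yields
Tr(ϱ_W²) = Tr(ϱ_V²) + Tr((ϱ_W - ϱ_V)²) ≥ Tr(ϱ_V²), the last term being the squared
Hilbert–Schmidt norm of a Hermitian matrix. Both square roots in B are antitone in Tr(ϱ²).
-/

open Matrix ComplexOrder

variable {n : Type*} [Fintype n]

lemma Matrix.IsHermitian.re_trace_mul_self_nonneg {A : Matrix n n ℂ} (hA : A.IsHermitian) :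
    0 ≤ (A * A).trace.re := by
  nth_rewrite 1 [← hA.eq]
  exact (Complex.nonneg_iff.mp (posSemidef_conjTranspose_mul_self A).trace_nonneg).1

lemma Matrix.trace_sub_mul_sub_self_of_trace_mul_eq {P Q : Matrix n n ℂ}
    (h : (P * Q).trace = (Q * Q).trace) :
    ((P - Q) * (P - Q)).trace = (P * P).trace - (Q * Q).trace := by
  rw [sub_mul, mul_sub, mul_sub, trace_sub, trace_sub, trace_sub, trace_mul_comm Q P, h]
  ring

/-- If `Q` is the orthogonal projection of `ρ` onto a subspace containing `Q`, and the residual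
`ρ - P` is orthogonal to `Q`, then `Tr(Q²) ≤ Tr(P²)`. -/
lemma Matrix.re_trace_mul_self_le_of_orthogonal {ρ P Q : Matrix n n ℂ} (hPQ : (P - Q).IsHermitian)
    (hP : ((ρ - P) * Q).trace = 0) (hQ : ((ρ - Q) * Q).trace = 0) :
    (Q * Q).trace.re ≤ (P * P).trace.re := by
  rw [sub_mul, trace_sub, sub_eq_zero] at hP hQ
  have hPythagoras := trace_sub_mul_sub_self_of_trace_mul_eq (hP.symm.trans hQ)
  have hsq := hPQ.re_trace_mul_self_nonneg
  rw [hPythagoras, Complex.sub_re] at hsq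
  linarith

theorem stmt6_general {d : ℕ} (ρ₀ ϱV ϱW : Matrix (Fin d) (Fin d) ℂ)
    (V W : Submodule ℝ (Matrix (Fin d) (Fin d) ℂ))
    (hVW : V ≤ W)
    (hVH : ∀ A ∈ W, A.IsHermitian)
    (hϱVmem : ϱV ∈ V)
    (hϱVorth : ∀ B ∈ V, Matrix.trace ((ρ₀ - ϱV) * B) = 0)
    (hϱWmem : ϱW ∈ W)
    (hϱWorth : ∀ B ∈ W, Matrix.trace ((ρ₀ - ϱW) * B) = 0) :
    Real.sqrt (1 - (Matrix.trace (ϱW * ϱW)).re) +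
        Real.sqrt ((Matrix.trace (ρ₀ * ρ₀)).re - (Matrix.trace (ϱW * ϱW)).re) ≤
      Real.sqrt (1 - (Matrix.trace (ϱV * ϱV)).re) +
        Real.sqrt ((Matrix.trace (ρ₀ * ρ₀)).re - (Matrix.trace (ϱV * ϱV)).re) := by
  have hϱVW : ϱV ∈ W := hVW hϱVmem
  have hmono : (ϱV * ϱV).trace.re ≤ (ϱW * ϱW).trace.re :=
    re_trace_mul_self_le_of_orthogonal ((hVH ϱW hϱWmem).sub (hVH ϱV hϱVW))
      (hϱWorth ϱV hϱVW) (hϱVorth ϱV hϱVmem)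
  gcongr

/-- monotonicity of the bound B(ϱ) = √(1 − Tr ϱ²) + √(Tr ρ₀² − Tr ϱ²)
under enlarging the measured subspace: if V ⊆ W then B(ϱ_W) ≤ B(ϱ_V). -/
theorem stmt6 {d : ℕ} (ρ₀ ϱV ϱW : Matrix (Fin d) (Fin d) ℂ)
    (V W : Submodule ℝ (Matrix (Fin d) (Fin d) ℂ))
    (hVW : V ≤ W)
    (hVH : ∀ A ∈ W, A.IsHermitian)
    (hρ₀ : ρ₀.PosSemidef) (htρ₀ : ρ₀.trace = 1)
    (hϱVmem : ϱV ∈ V)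
    (hϱVorth : ∀ B ∈ V, Matrix.trace ((ρ₀ - ϱV) * B) = 0)
    (hϱWmem : ϱW ∈ W)
    (hϱWorth : ∀ B ∈ W, Matrix.trace ((ρ₀ - ϱW) * B) = 0) :
    Real.sqrt (1 - (Matrix.trace (ϱW * ϱW)).re) +
        Real.sqrt ((Matrix.trace (ρ₀ * ρ₀)).re - (Matrix.trace (ϱW * ϱW)).re) ≤
      Real.sqrt (1 - (Matrix.trace (ϱV * ϱV)).re) +
        Real.sqrt ((Matrix.trace (ρ₀ * ρ₀)).re - (Matrix.trace (ϱV * ϱV)).re) :=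
  stmt6_general ρ₀ ϱV ϱW V W hVW hVH hϱVmem hϱVorth hϱWmem hϱWorth
end
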